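/- KL divergence of product of Gaussian observations on two matrices: let M, M' be d x d real matrices and consider the distribution of a single observation (X, Y) where X is uniform on the d^2 canonical matrices e_i e_j^T and, conditionally on X, Y is Gaussian with mean <X, M> (resp. <X, M'>) and variance A^2. Then the KL divergence between the two observation distributions equals ||M - M'||_F^2 / (2 A^2 d^2). -/

import Mathlib

open MeasureTheory ProbabilityTheory
open scoped NNReal

/-- Kullback–Leibler divergence, defined as the expectation under the first measure of
the log-likelihood ratio. -/
noncomputable def klDiv {α : Type*} [MeasurableSpace α] (μ ν : Measure α) : ℝ :=
  ∫ x, llr μ ν x ∂μ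

/-- The distribution of one observation `(X, Y)`: the entry `X` is uniform over the
`d²` canonical positions and, given `X = (a, b)`, `Y ~ N(M a b, A²)`. -/
noncomputable def obsLaw (d : ℕ) [NeZero d] (M : Matrix (Fin d) (Fin d) ℝ) (A : ℝ≥0) :
    Measure ((Fin d × Fin d) × ℝ) :=
  ((PMF.uniformOfFintype (Fin d × Fin d)).toMeasure).bind
    (fun ab => (gaussianReal (M ab.1 ab.2) (A ^ 2)).map (fun y => (ab, y)))

/-!
The observation law is the composition-product of the uniform law on entries with the Gaussian
kernel `(a, b) ↦ N(M a b, A²)`, and the two joint laws differ by the density ratio of the kernels.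
For equal variances the log of that ratio is affine in the observation,
`(m - m') / A² * (y - m) + (m - m')² / (2 A²)`, so integrating it against `N(m, A²)` kills the
linear term. Averaging the remaining `(m - m')² / (2 A²)` over the `d²` uniformly chosen entries
gives the formula.
-/

open Real
open scoped ENNReal

lemma MeasureTheory.Measure.bind_map_prodMk_eq_compProd {α β : Type*} [MeasurableSpace α]
    [MeasurableSpace β] (μ : Measure α) [SFinite μ] (κ : Kernel α β) [IsSFiniteKernel κ] :
    μ.bind (fun a => (κ a).map (Prod.mk a)) = μ ⊗ₘ κ := by
  rw [Measure.compProd_eq_comp_prod]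
  congr with a : 1
  rw [Kernel.prod_apply, Kernel.id_apply, Measure.dirac_prod]

namespace ProbabilityTheory

lemma gaussianReal_eq_withDensity_gaussianReal {v : ℝ≥0} (hv : v ≠ 0) (m m' : ℝ) :
    gaussianReal m v = (gaussianReal m' v).withDensity
      fun y => ENNReal.ofReal (gaussianPDFReal m v y / gaussianPDFReal m' v y) := by
  rw [gaussianReal_of_var_ne_zero _ hv, gaussianReal_of_var_ne_zero _ hv,
    ← withDensity_mul _ (measurable_gaussianPDF _ _) (by fun_prop)]
  congr 1 with y
  simp only [Pi.mul_apply, gaussianPDF]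
  rw [← ENNReal.ofReal_mul (gaussianPDFReal_nonneg _ _ _),
    mul_div_cancel₀ _ (gaussianPDFReal_pos _ _ _ hv).ne']

lemma log_gaussianPDFReal_div {v : ℝ≥0} (hv : v ≠ 0) (m m' y : ℝ) :
    log (gaussianPDFReal m v y / gaussianPDFReal m' v y)
      = (m - m') / v * (y - m) + (m - m') ^ 2 / (2 * v) := by
  have hv' : (0 : ℝ) < v := by positivity
  simp only [gaussianPDFReal]
  rw [mul_div_mul_left _ _ (by positivity), ← exp_sub, log_exp]
  field_simp
  ring

lemma integrable_log_gaussianPDFReal_div {v : ℝ≥0} (hv : v ≠ 0) (m m' : ℝ) :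
    Integrable (fun y => log (gaussianPDFReal m v y / gaussianPDFReal m' v y))
      (gaussianReal m v) := by
  simp_rw [log_gaussianPDFReal_div hv]
  have hid : Integrable (fun y => y) (gaussianReal m v) :=
    (memLp_id_gaussianReal 1).integrable le_rfl
  exact ((hid.sub (integrable_const m)).const_mul _).add (integrable_const _)

lemma integral_log_gaussianPDFReal_div {v : ℝ≥0} (hv : v ≠ 0) (m m' : ℝ) :
    ∫ y, log (gaussianPDFReal m v y / gaussianPDFReal m' v y) ∂gaussianReal m v
      = (m - m') ^ 2 / (2 * v) := by
  have hid : Integrable (fun y => y) (gaussianReal m v) :=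
    (memLp_id_gaussianReal 1).integrable le_rfl
  have hcentered : Integrable (fun y => y - m) (gaussianReal m v) := hid.sub (integrable_const m)
  simp_rw [log_gaussianPDFReal_div hv]
  rw [integral_add (hcentered.const_mul _) (integrable_const _),
    integral_const_mul, integral_sub hid (integrable_const m), integral_id_gaussianReal]
  simp

section GaussianKernel

variable {α : Type*} [MeasurableSpace α] [Countable α] [MeasurableSingletonClass α]

noncomputable def gaussianKernel (f : α → ℝ) (v : ℝ≥0) : Kernel α ℝ :=
  Kernel.ofFunOfCountable fun a => gaussianReal (f a) v

instance (f : α → ℝ) (v : ℝ≥0) : IsMarkovKernel (gaussianKernel f v) :=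
  ⟨fun a => inferInstanceAs (IsProbabilityMeasure (gaussianReal (f a) v))⟩

@[simp]
lemma gaussianKernel_apply (f : α → ℝ) (v : ℝ≥0) (a : α) :
    gaussianKernel f v a = gaussianReal (f a) v := rfl

lemma measurable_gaussianPDFReal_div (f g : α → ℝ) (v : ℝ≥0) :
    Measurable fun p : α × ℝ => gaussianPDFReal (f p.1) v p.2 / gaussianPDFReal (g p.1) v p.2 :=
  measurable_from_prod_countable_right fun a => by fun_prop

lemma gaussianKernel_eq_withDensity {v : ℝ≥0} (hv : v ≠ 0) (f g : α → ℝ) :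
    gaussianKernel f v = (gaussianKernel g v).withDensity
      fun a y => ENNReal.ofReal (gaussianPDFReal (f a) v y / gaussianPDFReal (g a) v y) := by
  ext1 a
  rw [Kernel.withDensity_apply _ (measurable_gaussianPDFReal_div f g v).ennreal_ofReal,
    gaussianKernel_apply, gaussianKernel_apply, gaussianReal_eq_withDensity_gaussianReal hv]

lemma llr_compProd_gaussianKernel {v : ℝ≥0} (hv : v ≠ 0) (μ : Measure α) [IsFiniteMeasure μ]
    (f g : α → ℝ) :
    llr (μ ⊗ₘ gaussianKernel f v) (μ ⊗ₘ gaussianKernel g v) =ᵐ[μ ⊗ₘ gaussianKernel f v]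
      fun p => log (gaussianPDFReal (f p.1) v p.2 / gaussianPDFReal (g p.1) v p.2) := by
  have hr := (measurable_gaussianPDFReal_div f g v).ennreal_ofReal
  have hwd : μ ⊗ₘ gaussianKernel f v = (μ ⊗ₘ gaussianKernel g v).withDensity
      fun p => ENNReal.ofReal (gaussianPDFReal (f p.1) v p.2 / gaussianPDFReal (g p.1) v p.2) := by
    have : IsSFiniteKernel ((gaussianKernel g v).withDensity fun a y =>
        ENNReal.ofReal (gaussianPDFReal (f a) v y / gaussianPDFReal (g a) v y)) :=
      Kernel.IsSFiniteKernel.withDensity _ fun _ _ => ENNReal.ofReal_ne_top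
    rw [gaussianKernel_eq_withDensity hv f g, Measure.compProd_withDensity hr]
  have hrn := Measure.rnDeriv_withDensity (μ ⊗ₘ gaussianKernel g v) hr
  rw [← hwd] at hrn
  have hac : μ ⊗ₘ gaussianKernel f v ≪ μ ⊗ₘ gaussianKernel g v :=
    hwd ▸ withDensity_absolutelyContinuous _ _
  filter_upwards [hac.ae_eq hrn] with p hp
  rw [llr, hp, ENNReal.toReal_ofReal
    (div_nonneg (gaussianPDFReal_nonneg _ _ _) (gaussianPDFReal_nonneg _ _ _))]

lemma klDiv_compProd_gaussianKernel [Finite α] {v : ℝ≥0} (hv : v ≠ 0) (μ : Measure α)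
    [IsFiniteMeasure μ] (f g : α → ℝ) :
    klDiv (μ ⊗ₘ gaussianKernel f v) (μ ⊗ₘ gaussianKernel g v)
      = ∫ a, (f a - g a) ^ 2 / (2 * v) ∂μ := by
  have hint : Integrable
      (fun p : α × ℝ => log (gaussianPDFReal (f p.1) v p.2 / gaussianPDFReal (g p.1) v p.2))
      (μ ⊗ₘ gaussianKernel f v) :=
    (Measure.integrable_compProd_iff
      (measurable_gaussianPDFReal_div f g v).log.aestronglyMeasurable).2
      ⟨ae_of_all _ fun a => integrable_log_gaussianPDFReal_div hv (f a) (g a), .of_finite⟩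
  rw [klDiv, integral_congr_ae (llr_compProd_gaussianKernel hv μ f g),
    Measure.integral_compProd hint]
  simp only [gaussianKernel_apply, integral_log_gaussianPDFReal_div hv]

end GaussianKernel

end ProbabilityTheory

lemma obsLaw_eq_compProd (d : ℕ) [NeZero d] (M : Matrix (Fin d) (Fin d) ℝ) (A : ℝ≥0) :
    obsLaw d M A = (PMF.uniformOfFintype (Fin d × Fin d)).toMeasure
      ⊗ₘ gaussianKernel (fun ab => M ab.1 ab.2) (A ^ 2) := by
  rw [← Measure.bind_map_prodMk_eq_compProd, obsLaw]; simp only [gaussianKernel_apply]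

/-- KL divergence between the Gaussian trace-regression observation distributions of
two `d × d` matrices equals `‖M - M'‖_F² / (2 A² d²)`. -/
theorem klDiv_obsLaw (d : ℕ) [NeZero d] (A : ℝ≥0) (hA : 0 < A)
    (M M' : Matrix (Fin d) (Fin d) ℝ) :
    klDiv (obsLaw d M A) (obsLaw d M' A)
      = (∑ a : Fin d, ∑ b : Fin d, (M a b - M' a b) ^ 2) / (2 * (A : ℝ) ^ 2 * d ^ 2) := by
  rw [obsLaw_eq_compProd, obsLaw_eq_compProd,
    klDiv_compProd_gaussianKernel (pow_ne_zero 2 hA.ne'), PMF.integral_eq_sum]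
  simp only [PMF.uniformOfFintype_apply, Fintype.card_prod, Fintype.card_fin, Nat.cast_mul,
    ENNReal.toReal_inv, ENNReal.toReal_mul, ENNReal.toReal_natCast, mul_inv_rev, NNReal.coe_pow,
    smul_eq_mul, Fintype.sum_prod_type, Finset.sum_div]
  refine Finset.sum_congr rfl fun a _ => Finset.sum_congr rfl fun b _ => ?_
  field_simp
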